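/- In the Friedrichs model, define Ã* on D(A*) by (Ã* g)(x) = x g(x) − c_g + (∫_ℝ g φ̄)·ψ(x), and let Ã be the operator on D(A) given by (Ã f)(x) = x f(x) + (∫_ℝ f ψ̄)·φ(x). Then: (i) the restriction of Ã* to {u ∈ D(A*) : Γ₁ u = 0 and Γ₂ u = 0} coincides with A (equal domains and equal action), and the restriction of A* to the same set coincides with Ã; (ii) for all f, g ∈ D(A*): ⟨A* f, g⟩ − ⟨f, Ã* g⟩ = Γ₁ f · conj(Γ₂ g) − Γ₂ f · conj(Γ₁ g). -/

import Mathlib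

open MeasureTheory Filter Topology
open scoped InnerProductSpace

noncomputable section

/-- The space `L²(ℝ)` (complex valued). -/
abbrev L2 := Lp ℂ 2 (volume : Measure ℝ)

/-- Membership in the domain of the minimal Friedrichs-model operator `A`:
`x f(x) ∈ L²` and `lim_{R→∞} ∫_{-R}^R f = 0`. -/
abbrev inDomA (f : L2) : Prop :=
  MemLp (fun x : ℝ => (x : ℂ) * f x) 2 volume ∧
    Tendsto (fun R : ℝ => ∫ x in Set.Ioc (-R) R, f x) atTop (nhds 0)

/-- Membership in the domain of the maximal operator(s): there is a constant `c`
(the trace `Γ₂ f = c_f`) with `x f(x) − c ∈ L²`. -/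
abbrev inDomAstar (f : L2) (c : ℂ) : Prop :=
  MemLp (fun x : ℝ => (x : ℂ) * f x - c) 2 volume

/-- The minimal operator `A`: `(A f)(x) = x f(x) + ⟨f, φ⟩ ψ(x)`
(paper inner product `⟨f, φ⟩ = ⟪φ, f⟫` in Mathlib's convention). -/
def Aop (φ ψ f : L2) (hf : inDomA f) : L2 :=
  MemLp.toLp (fun x : ℝ => (x : ℂ) * f x) hf.1 + ⟪φ, f⟫_ℂ • ψ

/-- The adjoint expression `A*`: `(A* f)(x) = x f(x) − c_f + ⟨f, ψ⟩ φ(x)`. -/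
def AstarOp (φ ψ f : L2) (c : ℂ) (h : inDomAstar f c) : L2 :=
  MemLp.toLp (fun x : ℝ => (x : ℂ) * f x - c) h + ⟪ψ, f⟫_ℂ • φ

/-- The expression `Ã*`: `(Ã* f)(x) = x f(x) − c_f + ⟨f, φ⟩ ψ(x)`. -/
def AtildeStarOp (φ ψ f : L2) (c : ℂ) (h : inDomAstar f c) : L2 :=
  MemLp.toLp (fun x : ℝ => (x : ℂ) * f x - c) h + ⟪φ, f⟫_ℂ • ψ

/-- The operator `Ã`: `(Ã f)(x) = x f(x) + ⟨f, ψ⟩ φ(x)` on `D(A)`. -/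
def AtildeOp (φ ψ f : L2) (hf : inDomA f) : L2 :=
  MemLp.toLp (fun x : ℝ => (x : ℂ) * f x) hf.1 + ⟪ψ, f⟫_ℂ • φ


/-!
For `f ∈ L²` with `x f(x) − c ∈ L²`, the identity
`f = (x f − c) · x / (1 + x²) + f / (1 + x²) + c · x / (1 + x²)` writes `f` as an integrable
function (the first two terms are products of two `L²` functions) plus a multiple of an odd
function, whose symmetric truncated integrals vanish; hence `Γ₁ f` exists. In the Green identity
the terms `x f ḡ` cancel pointwise, leaving `conj(c_g) f − c_f ḡ`, which is therefore integrable,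
and its integral is the limit of `conj(c_g) ∫_{-R}^R f − c_f conj(∫_{-R}^R g)`.
-/

open Set

section TruncatedIntegral

variable {E : Type*} [NormedAddCommGroup E] [NormedSpace ℝ E]

lemma tendsto_setIntegral_Ioc_neg_self {u : ℝ → E} (hu : Integrable u) :
    Tendsto (fun R : ℝ => ∫ x in Ioc (-R) R, u x) atTop (𝓝 (∫ x, u x)) :=
  (intervalIntegral_tendsto_integral hu tendsto_neg_atTop_atBot tendsto_id).congr' <| by
    filter_upwards [eventually_ge_atTop 0] with R hR
    rw [id, intervalIntegral.integral_of_le (by linarith)]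

lemma setIntegral_Ioc_neg_self_eq_zero_of_odd {u : ℝ → E} (hu : ∀ x, u (-x) = -u x) (R : ℝ) :
    ∫ x in Ioc (-R) R, u x = 0 := by
  rcases le_total 0 R with hR | hR
  · rw [← intervalIntegral.integral_of_le (by linarith)]
    have h := intervalIntegral.integral_comp_neg (a := -R) (b := R) u
    simp only [hu, intervalIntegral.integral_neg, neg_neg] at h
    have h2 : (2 : ℝ) • ∫ x in -R..R, u x = 0 := by
      rw [two_smul]; nth_rw 1 [← h]; exact neg_add_cancel _
    exact (smul_eq_zero.mp h2).resolve_left two_ne_zero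
  · rw [Ioc_eq_empty (by linarith), Measure.restrict_empty, integral_zero_measure]

end TruncatedIntegral

lemma MeasureTheory.MemLp.integrableOn_Ioc {E : Type*} [NormedAddCommGroup E] {f : ℝ → E}
    {p : ENNReal} (hf : MemLp f p volume) (hp : 1 ≤ p) (a b : ℝ) : IntegrableOn f (Ioc a b) :=
  ((hf.locallyIntegrable hp).integrableOn_isCompact isCompact_Icc).mono_set Ioc_subset_Icc_self

lemma norm_one_add_ofReal_sq (x : ℝ) : ‖1 + (x : ℂ) ^ 2‖ = 1 + x ^ 2 := by
  norm_cast; rw [Real.norm_of_nonneg (by positivity)]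

lemma one_add_ofReal_sq_ne_zero (x : ℝ) : 1 + (x : ℂ) ^ 2 ≠ 0 :=
  norm_ne_zero_iff.mp <| by rw [norm_one_add_ofReal_sq]; positivity

lemma memLp_two_of_sq_norm_le_inv_one_add_sq {g : ℝ → ℂ} (hg : Continuous g)
    (h : ∀ x, ‖g x‖ ^ 2 ≤ (1 + x ^ 2)⁻¹) : MemLp g 2 volume :=
  (memLp_two_iff_integrable_sq_norm hg.aestronglyMeasurable).2 <|
    integrable_inv_one_add_sq.mono' (by fun_prop) (ae_of_all _ fun x => by simpa using h x)

lemma memLp_inv_one_add_sq : MemLp (fun x : ℝ => (1 + (x : ℂ) ^ 2)⁻¹) 2 volume := by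
  refine memLp_two_of_sq_norm_le_inv_one_add_sq
    (by fun_prop (disch := exact one_add_ofReal_sq_ne_zero)) fun x => ?_
  rw [norm_inv, norm_one_add_ofReal_sq, inv_pow, inv_le_inv₀ (by positivity) (by positivity)]
  nlinarith [sq_nonneg x]

lemma memLp_mul_inv_one_add_sq : MemLp (fun x : ℝ => (x : ℂ) * (1 + (x : ℂ) ^ 2)⁻¹) 2 volume := by
  refine memLp_two_of_sq_norm_le_inv_one_add_sq
    (by fun_prop (disch := exact one_add_ofReal_sq_ne_zero)) fun x => ?_
  rw [norm_mul, norm_inv, norm_one_add_ofReal_sq, Complex.norm_real, Real.norm_eq_abs, mul_pow,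
    sq_abs, inv_pow, ← div_eq_mul_inv, div_le_iff₀ (by positivity), sq (1 + x ^ 2),
    inv_mul_cancel_left₀ (by positivity)]
  linarith

theorem exists_tendsto_setIntegral_Ioc_of_memLp_mul_sub_const {f : ℝ → ℂ} (hf : MemLp f 2 volume)
    {c : ℂ} (h : MemLp (fun x : ℝ => (x : ℂ) * f x - c) 2 volume) :
    ∃ L, Tendsto (fun R : ℝ => ∫ x in Ioc (-R) R, f x) atTop (𝓝 L) := by
  set k : ℝ → ℂ := fun x => (x : ℂ) * (1 + (x : ℂ) ^ 2)⁻¹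
  set w : ℝ → ℂ := fun x => ((x : ℂ) * f x - c) * k x + f x * (1 + (x : ℂ) ^ 2)⁻¹
  have hw : Integrable w :=
    (h.integrable_mul memLp_mul_inv_one_add_sq).add (hf.integrable_mul memLp_inv_one_add_sq)
  have hk_odd : ∀ x, k (-x) = -k x := fun x => by simp only [k, Complex.ofReal_neg]; ring
  have hf_eq : ∀ x, f x = w x + c * k x := fun x => by
    simp only [w, k]
    field_simp [one_add_ofReal_sq_ne_zero x]
    ring
  refine ⟨∫ x, w x, (tendsto_setIntegral_Ioc_neg_self hw).congr fun R => ?_⟩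
  have hkR : IntegrableOn k (Ioc (-R) R) :=
    memLp_mul_inv_one_add_sq.integrableOn_Ioc one_le_two _ _
  calc ∫ x in Ioc (-R) R, w x
      = (∫ x in Ioc (-R) R, w x) + c * ∫ x in Ioc (-R) R, k x := by
        rw [setIntegral_Ioc_neg_self_eq_zero_of_odd hk_odd, mul_zero, add_zero]
    _ = ∫ x in Ioc (-R) R, f x := by
        rw [← integral_const_mul, ← integral_add hw.integrableOn (hkR.const_mul c)]
        simp only [hf_eq]

lemma ae_inner_sub_inner_toLp_eq {f g : L2} {cf cg : ℂ} (hf : inDomAstar f cf)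
    (hg : inDomAstar g cg) :
    (fun x => ⟪g x, hf.toLp _ x⟫_ℂ - ⟪hg.toLp _ x, f x⟫_ℂ)
      =ᵐ[volume] fun x => (starRingEnd ℂ) cg * f x - cf * (starRingEnd ℂ) (g x) := by
  filter_upwards [hf.coeFn_toLp, hg.coeFn_toLp] with x hFx hGx
  simp only [RCLike.inner_apply, hFx, hGx, map_sub, map_mul, Complex.conj_ofReal]
  ring

theorem inner_AstarOp_sub_inner_AtildeStarOp (φ ψ f g : L2) (cf cg : ℂ) (hf : inDomAstar f cf)
    (hg : inDomAstar g cg) {Γ1f Γ1g : ℂ}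
    (hFt : Tendsto (fun R : ℝ => ∫ x in Ioc (-R) R, f x) atTop (𝓝 Γ1f))
    (hGt : Tendsto (fun R : ℝ => ∫ x in Ioc (-R) R, g x) atTop (𝓝 Γ1g)) :
    ⟪g, AstarOp φ ψ f cf hf⟫_ℂ - ⟪AtildeStarOp φ ψ g cg hg, f⟫_ℂ
      = Γ1f * (starRingEnd ℂ) cg - cf * (starRingEnd ℂ) Γ1g := by
  set u : ℝ → ℂ := fun x => (starRingEnd ℂ) cg * f x - cf * (starRingEnd ℂ) (g x)
  have hu_ae := ae_inner_sub_inner_toLp_eq hf hg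
  have hu : Integrable u :=
    ((L2.integrable_inner (𝕜 := ℂ) g _).sub (L2.integrable_inner (𝕜 := ℂ) _ f)).congr hu_ae
  have hu_trunc : Tendsto (fun R : ℝ => ∫ x in Ioc (-R) R, u x) atTop
      (𝓝 ((starRingEnd ℂ) cg * Γ1f - cf * (starRingEnd ℂ) Γ1g)) := by
    refine ((tendsto_const_nhds.mul hFt).sub
      (tendsto_const_nhds.mul ((Complex.continuous_conj.tendsto _).comp hGt))).congr fun R => ?_
    have hfR := (Lp.memLp f).integrableOn_Ioc one_le_two (-R) R
    have hgR : IntegrableOn (fun x => (starRingEnd ℂ) (g x)) (Ioc (-R) R) :=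
      (Lp.memLp g).star.integrableOn_Ioc one_le_two (-R) R
    rw [integral_sub (hfR.const_mul _) (hgR.const_mul _), integral_const_mul, integral_const_mul,
      integral_conj, Function.comp_apply]
  calc ⟪g, AstarOp φ ψ f cf hf⟫_ℂ - ⟪AtildeStarOp φ ψ g cg hg, f⟫_ℂ
      = ⟪g, hf.toLp _⟫_ℂ - ⟪hg.toLp _, f⟫_ℂ := by
        rw [AstarOp, AtildeStarOp, inner_add_right, inner_add_left, inner_smul_right,
          inner_smul_left, inner_conj_symm]
        ring
    _ = ∫ x, u x := by
        rw [L2.inner_def, L2.inner_def, ← integral_sub (L2.integrable_inner _ _)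
          (L2.integrable_inner _ _), integral_congr_ae hu_ae]
    _ = Γ1f * (starRingEnd ℂ) cg - cf * (starRingEnd ℂ) Γ1g := by
        rw [tendsto_nhds_unique (tendsto_setIntegral_Ioc_neg_self hu) hu_trunc, mul_comm]

/-- (i) The restriction of `Ã*` to
`{u ∈ D(A*) : Γ₁u = 0, Γ₂u = 0}` coincides with `A` (equal domains and action), and the
restriction of `A*` to the same set coincides with `Ã`; (ii) the modified Green identity
`⟨A*f, g⟩ − ⟨f, Ã*g⟩ = Γ₁f·conj(Γ₂g) − Γ₂f·conj(Γ₁g)` holds on `D(A*)`. -/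
theorem statement_17 (φ ψ : L2) :
    (∀ f : L2,
      (inDomAstar f 0 ∧
          Tendsto (fun R : ℝ => ∫ x in Set.Ioc (-R) R, f x) atTop (nhds 0))
        ↔ inDomA f)
    ∧ (∀ (f : L2) (h0 : inDomAstar f 0)
        (hΓ : Tendsto (fun R : ℝ => ∫ x in Set.Ioc (-R) R, f x) atTop (nhds 0))
        (hA : inDomA f),
        AtildeStarOp φ ψ f 0 h0 = Aop φ ψ f hA
          ∧ AstarOp φ ψ f 0 h0 = AtildeOp φ ψ f hA)
    ∧ (∀ (f g : L2) (cf cg : ℂ) (hf : inDomAstar f cf) (hg : inDomAstar g cg),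
        ∃ Γ1f Γ1g : ℂ,
          Tendsto (fun R : ℝ => ∫ x in Set.Ioc (-R) R, f x) atTop (nhds Γ1f) ∧
          Tendsto (fun R : ℝ => ∫ x in Set.Ioc (-R) R, g x) atTop (nhds Γ1g) ∧
          ⟪g, AstarOp φ ψ f cf hf⟫_ℂ - ⟪AtildeStarOp φ ψ g cg hg, f⟫_ℂ
            = Γ1f * (starRingEnd ℂ) cg - cf * (starRingEnd ℂ) Γ1g) := by
  refine ⟨fun f => by simp only [inDomAstar, sub_zero], fun f h0 _ hA => ?_,
    fun f g cf cg hf hg => ?_⟩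
  · have h_toLp : h0.toLp _ = hA.1.toLp _ :=
      MemLp.toLp_congr _ _ (ae_of_all _ fun x => sub_zero _)
    exact ⟨by rw [AtildeStarOp, Aop, h_toLp], by rw [AstarOp, AtildeOp, h_toLp]⟩
  · obtain ⟨Γ1f, hFt⟩ := exists_tendsto_setIntegral_Ioc_of_memLp_mul_sub_const (Lp.memLp f) hf
    obtain ⟨Γ1g, hGt⟩ := exists_tendsto_setIntegral_Ioc_of_memLp_mul_sub_const (Lp.memLp g) hg
    exact ⟨Γ1f, Γ1g, hFt, hGt, inner_AstarOp_sub_inner_AtildeStarOp φ ψ f g cf cg hf hg hFt hGt⟩
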